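/- Let H be a separable Hilbert space and let D_s, for s in a compact connected subset U of R^m containing 0, be a family of self-adjoint unbounded Fredholm operators on H with common domain dom(D) (the domain of D := D_0), such that all graph norms are equivalent to that of D and such that s ↦ D_s is continuous as a map from U to the bounded operators from (dom(D), graph norm) to H. Then s ↦ D_s is continuous with respect to the gap metric d_gap(D_1, D_2) := ‖(D_1 + i)^{-1} − (D_2 + i)^{-1}‖. -/

import Mathlib

open scoped ComplexInnerProductSpace

/-!
Write `T s := D_s + i`, a bounded operator from the domain to `H`. The hypotheses say that each
`T s` is bijective and that `R s ∘ T s = ι`, so `R s = ι ∘ (T s)⁻¹`. By the open mapping theorem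
`(T s)⁻¹` is bounded, and inversion is continuous at invertible operators, so the norm continuity
of `s ↦ T s` passes to `s ↦ R s`.
-/

namespace ContinuousLinearMap

variable {𝕜 E F : Type*} [NontriviallyNormedField 𝕜]
  [NormedAddCommGroup E] [NormedSpace 𝕜 E] [CompleteSpace E]
  [NormedAddCommGroup F] [NormedSpace 𝕜 F]

theorem isInvertible_of_bijective [CompleteSpace F] {T : E →L[𝕜] F}
    (hT : Function.Bijective T) : T.IsInvertible :=
  ⟨.ofBijective T (LinearMap.ker_eq_bot.mpr hT.1) (LinearMap.range_eq_top.mpr hT.2),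
    ContinuousLinearEquiv.coe_ofBijective _ _ _⟩

theorem _root_.Continuous.inverse_of_isInvertible {X : Type*} [TopologicalSpace X]
    {T : X → E →L[𝕜] F} (hT : Continuous T) (hinv : ∀ x, (T x).IsInvertible) :
    Continuous fun x => (T x).inverse := by
  refine continuous_iff_continuousAt.mpr fun x => ?_
  obtain ⟨e, he⟩ := hinv x
  have : ContinuousAt inverse (T x) := he ▸ (contDiffAt_map_inverse (n := 0) e).continuousAt
  exact this.comp hT.continuousAt

end ContinuousLinearMap

theorem stmt_0_general {m : ℕ} (U : Set (EuclideanSpace ℝ (Fin m)))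
    {H Dm : Type*} [NormedAddCommGroup H] [InnerProductSpace ℂ H] [CompleteSpace H]
    [NormedAddCommGroup Dm] [InnerProductSpace ℂ Dm] [CompleteSpace Dm]
    (ι : Dm →L[ℂ] H) (hι : Function.Injective ι)
    (A : U → (Dm →L[ℂ] H)) (hA : Continuous A)
    -- the resolvents `(D_s + i)⁻¹` exist (self-adjointness, part 2)
    (R : U → (H →L[ℂ] H))
    (hR : ∀ s : U, ∀ u : Dm, R s (A s u + Complex.I • ι u) = ι u)
    (hRsurj : ∀ s : U, ∀ v : H, ∃ u : Dm, A s u + Complex.I • ι u = v) :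
    Continuous R := by
  set T : U → Dm →L[ℂ] H := fun s => A s + Complex.I • ι
  have hRT : ∀ s, R s ∘L T s = ι := fun s => ContinuousLinearMap.ext (hR s)
  have hTinv : ∀ s, (T s).IsInvertible := fun s =>
    ContinuousLinearMap.isInvertible_of_bijective
      ⟨.of_comp (f := R s) (by rwa [← ContinuousLinearMap.coe_comp, hRT s]), hRsurj s⟩
  have hR_eq : R = fun s => ι ∘L (T s).inverse := funext fun s => by
    rw [← hRT s, ContinuousLinearMap.comp_assoc, (hTinv s).self_comp_inverse,
      ContinuousLinearMap.comp_id]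
  rw [hR_eq]
  exact continuous_const.clm_comp ((hA.add continuous_const).inverse_of_isInvertible hTinv)

/-- A family of self-adjoint unbounded Fredholm operators `D_s`, `s ∈ U ⊆ ℝ^m` compact
connected with `0 ∈ U`, with common domain (modelled by a Hilbert space `Dm` with its graph
norm, mapped into `H` by `ι`), depending continuously on `s` as bounded operators from the
domain to `H`, is continuous in the gap topology, i.e. the resolvents `R s = (D_s + i)⁻¹`
depend norm-continuously on `s`. -/
theorem stmt_0 {m : ℕ} (U : Set (EuclideanSpace ℝ (Fin m)))
    (hUcpt : IsCompact U) (hUconn : IsConnected U) (hU0 : 0 ∈ U)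
    {H Dm : Type*} [NormedAddCommGroup H] [InnerProductSpace ℂ H] [CompleteSpace H]
    [TopologicalSpace.SeparableSpace H]
    [NormedAddCommGroup Dm] [InnerProductSpace ℂ Dm] [CompleteSpace Dm]
    (ι : Dm →L[ℂ] H) (hι : Function.Injective ι) (hdense : DenseRange ι)
    (A : U → (Dm →L[ℂ] H)) (hA : Continuous A)
    -- each `D_s` is symmetric (self-adjointness, part 1)
    (hsym : ∀ s : U, ∀ u v : Dm, ⟪ι u, A s v⟫ = ⟪A s u, ι v⟫)
    -- each `D_s` is Fredholm
    (hker : ∀ s : U, FiniteDimensional ℂ ↥(LinearMap.ker (A s : Dm →ₗ[ℂ] H)))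
    (hcoker : ∀ s : U, ∃ W : Submodule ℂ H, FiniteDimensional ℂ ↥W ∧
      LinearMap.range (A s : Dm →ₗ[ℂ] H) ⊔ W = ⊤)
    -- the resolvents `(D_s + i)⁻¹` exist (self-adjointness, part 2)
    (R : U → (H →L[ℂ] H))
    (hR : ∀ s : U, ∀ u : Dm, R s (A s u + Complex.I • ι u) = ι u)
    (hRsurj : ∀ s : U, ∀ v : H, ∃ u : Dm, A s u + Complex.I • ι u = v) :
    Continuous R :=
  stmt_0_general U ι hι A hA R hR hRsurj
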